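/- Let T > 2, let t₁ < ⋯ < t_n be real numbers in [0,T] with consecutive gaps at least 1, and let m ≥ 2 be an integer. Then for every t with mT ≤ t ≤ (m+1)T, Σ_{k=1}^n 1/(1 + (t − t_k)²) ≤ 1/((m−1)²T²) + arctan((m+1)T) − arctan((m−2)T). -/
import Mathlib

lemma arctan_mono : Monotone Real.arctan := Real.arctan_strictMono.monotone

lemma key_mvt (a b : ℝ) (ha : 0 ≤ a) (hab : a + 1 ≤ b) :
    1 / (1 + b ^ 2) ≤ Real.arctan b - Real.arctan a := by
  have hlt : a < b := by linarith
  obtain ⟨c, hc, hc'⟩ := exists_deriv_eq_slope Real.arctan hlt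
    (Real.continuous_arctan.continuousOn)
    (Real.differentiable_arctan.differentiableOn)
  rw [Real.deriv_arctan] at hc'
  have hcb : c ^ 2 ≤ b ^ 2 := by nlinarith [hc.1, hc.2]
  have h1 : (0 : ℝ) < 1 + c ^ 2 := by positivity
  have h2 : (0 : ℝ) < 1 + b ^ 2 := by positivity
  rw [div_eq_div_iff h1.ne' (sub_ne_zero.mpr hlt.ne')] at hc'
  have hD : 0 < Real.arctan b - Real.arctan a := sub_pos.mpr (Real.arctan_strictMono hlt)
  rw [div_le_iff₀ h2]
  nlinarith [hc', hcb, hD, h1]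

theorem stmt10 (T : ℝ) (hT : 2 < T) (n : ℕ) (t : Fin n → ℝ)
    (hmem : ∀ k, t k ∈ Set.Icc 0 T)
    (hsep : ∀ (k : Fin n) (h : (k : ℕ) + 1 < n), 1 ≤ t ⟨(k : ℕ) + 1, h⟩ - t k)
    (m : ℕ) (hm : 2 ≤ m) (s : ℝ)
    (hs1 : (m : ℝ) * T ≤ s) (hs2 : s ≤ ((m : ℝ) + 1) * T) :
    ∑ k, 1 / (1 + (s - t k) ^ 2) ≤
      1 / (((m : ℝ) - 1) ^ 2 * T ^ 2) +
        (Real.arctan (((m : ℝ) + 1) * T) - Real.arctan (((m : ℝ) - 2) * T)) := by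
  have hm2 : (2 : ℝ) ≤ (m : ℝ) := by exact_mod_cast hm
  have hT0 : (0 : ℝ) < T := by linarith
  have harc : Real.arctan (((m : ℝ) - 2) * T) ≤ Real.arctan (((m : ℝ) + 1) * T) :=
    arctan_mono (by nlinarith)
  have hrhs0 : (0 : ℝ) ≤ 1 / (((m : ℝ) - 1) ^ 2 * T ^ 2) := by positivity
  cases n with
  | zero =>
    simp only [Finset.univ_eq_empty, Finset.sum_empty]
    linarith
  | succ N =>
    set u : ℕ → ℝ := fun k => t ⟨min k N, Nat.lt_succ_of_le (min_le_right _ _)⟩ with hu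
    have huk : ∀ (k : ℕ) (h : k < N + 1), u k = t ⟨k, h⟩ := by
      intro k h
      simp only [hu]
      congr 1
      exact Fin.ext (by simp; omega)
    -- basic bounds
    have hub : ∀ (k : ℕ), 0 ≤ u k ∧ u k ≤ T := by
      intro k
      exact ⟨(hmem _).1, (hmem _).2⟩
    -- rewrite sum over Fin as sum over range
    have hsum : ∑ k : Fin (N + 1), 1 / (1 + (s - t k) ^ 2)
        = ∑ k ∈ Finset.range (N + 1), 1 / (1 + (s - u k) ^ 2) := by
      rw [← Fin.sum_univ_eq_sum_range]
      apply Finset.sum_congr rfl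
      intro k _
      rw [huk k k.isLt]
    rw [hsum, Finset.sum_range_succ]
    have hstep : ∀ k ∈ Finset.range N,
        1 / (1 + (s - u k) ^ 2) ≤ Real.arctan (s - u k) - Real.arctan (s - u (k + 1)) := by
      intro k hk
      have hkN := Finset.mem_range.mp hk
      apply key_mvt
      · have := (hub (k + 1)).2
        nlinarith
      · have hsep' := hsep ⟨k, by omega⟩ (by simp; omega)
        rw [huk k (by omega), huk (k + 1) (by omega)]
        have : t ⟨k + 1, by omega⟩ - t ⟨k, by omega⟩ ≥ 1 := hsep'
        linarith
    have htel : ∑ k ∈ Finset.range N, 1 / (1 + (s - u k) ^ 2)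
        ≤ Real.arctan (s - u 0) - Real.arctan (s - u N) := by
      calc ∑ k ∈ Finset.range N, 1 / (1 + (s - u k) ^ 2)
          ≤ ∑ k ∈ Finset.range N, (Real.arctan (s - u k) - Real.arctan (s - u (k + 1))) :=
            Finset.sum_le_sum hstep
        _ = Real.arctan (s - u 0) - Real.arctan (s - u N) :=
            Finset.sum_range_sub' (fun k => Real.arctan (s - u k)) N
    have h1 : Real.arctan (s - u 0) ≤ Real.arctan (((m : ℝ) + 1) * T) :=
      arctan_mono (by have := (hub 0).1; linarith)
    have h2 : Real.arctan (((m : ℝ) - 2) * T) ≤ Real.arctan (s - u N) :=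
      arctan_mono (by have := (hub N).2; nlinarith)
    have h3 : 1 / (1 + (s - u N) ^ 2) ≤ 1 / (((m : ℝ) - 1) ^ 2 * T ^ 2) := by
      have huT := (hub N).2
      have h4 : ((m : ℝ) - 1) * T ≤ s - u N := by nlinarith
      have h5 : (0 : ℝ) ≤ ((m : ℝ) - 1) * T := by nlinarith
      apply one_div_le_one_div_of_le
      · exact mul_pos (pow_pos (by linarith) 2) (pow_pos hT0 2)
      · nlinarith [mul_self_le_mul_self h5 h4]
    linarith
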